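/- Let κ = r, or assume k^{ch} ≥ 0 and let κ ∈ {k^{ch}, r}. Then: (1) for every l ∈ {0,…,κ−1}, z_l(z) tends to the nonzero value σ_l·exp(μ_{κ−l−1,κ}) as z → μ_κ with z ∈ H; (2) for every q = (q₀,…,q_r) ∈ ℚ^{r+1} with (q_κ,…,q_r) ≠ 0: if q is κ-positive then |(σ𝒵)^{⊗q}(z)| → 0 as z → μ_κ with z ∈ H, and if q is κ-negative then |(σ𝒵)^{⊗q}(z)| → +∞ as z → μ_κ with z ∈ H. (Proposition 5.34 of the paper for a fixed value of the parameter t, with the definable curve replaced by the limit z → μ_κ within H.) -/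

import Mathlib

/-- The iterated functions `g_l` of a logarithmic scale (for a fixed parameter `t`):
`g_0 x = x - Θ 0`, `g_{l+1} x = log (σ l * g_l x) - Θ (l+1)`. -/
noncomputable def gIter (Θ σ : ℕ → ℝ) : ℕ → ℝ → ℝ
  | 0, x => x - Θ 0
  | l + 1, x => Real.log (σ l * gIter Θ σ l x) - Θ (l + 1)

/-- The domains `D_l`: `D_0 = ℝ`, `D_{l+1} = {x ∈ D_l : σ l * g_l x > 0}`.
Note that the final domain `D` of the paper equals `DIter Θ σ (r+1)`. -/
def DIter (Θ σ : ℕ → ℝ) : ℕ → Set ℝ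
  | 0 => Set.univ
  | l + 1 => {x | x ∈ DIter Θ σ l ∧ 0 < σ l * gIter Θ σ l x}

/-- The auxiliary numbers `μ_{j,l}`: `μ_{0,l} = Θ l`,
`μ_{j+1,l} = Θ (l-(j+1)) + σ (l-(j+1)) * exp (μ_{j,l})`. -/
noncomputable def muAux (Θ σ : ℕ → ℝ) (l : ℕ) : ℕ → ℝ
  | 0 => Θ l
  | j + 1 => Θ (l - (j + 1)) + σ (l - (j + 1)) * Real.exp (muAux Θ σ l j)

/-- The numbers `μ_l := μ_{l,l}`. -/
noncomputable def mu (Θ σ : ℕ → ℝ) (l : ℕ) : ℝ := muAux Θ σ l l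

/-- The complex extensions `z_l` of the functions of a logarithmic scale:
`z_0 z = z - Θ 0`, `z_{l+1} z = log (σ l * z_l z) - Θ (l+1)`, with the principal
branch of the complex logarithm. -/
noncomputable def zIter (Θ σ : ℕ → ℝ) : ℕ → ℂ → ℂ
  | 0, z => z - (Θ 0 : ℂ)
  | l + 1, z => Complex.log ((σ l : ℂ) * zIter Θ σ l z) - (Θ (l + 1) : ℂ)

/-- The complex domains `H_l`: `H_0 = ℂ`,
`H_{l+1} = {z ∈ H_l : σ l * z_l z ∈ ℂ⁻}`, where `ℂ⁻ = ℂ ∖ ℝ_{≤0}` is the slit plane.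
Note that the final domain `H` of the paper equals `HIter Θ σ (r+1)`. -/
def HIter (Θ σ : ℕ → ℝ) : ℕ → Set ℂ
  | 0 => Set.univ
  | l + 1 => {z | z ∈ HIter Θ σ l ∧ (σ l : ℂ) * zIter Θ σ l z ∈ Complex.slitPlane}

/-- The principal power `w^a := exp (a * log w)` (principal branch of the logarithm). -/
noncomputable def pcpow (w a : ℂ) : ℂ := Complex.exp (a * Complex.log w)

/-- The function `(σ𝒵)^{⊗q} (z) := ∏_{j=0}^{r} (σ j * z_j z)^{q j}` with principal powers. -/
noncomputable def sigmaZpow (Θ σ : ℕ → ℝ) (r : ℕ) (q : ℕ → ℚ) (z : ℂ) : ℂ :=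
  ∏ j ∈ Finset.range (r + 1), pcpow ((σ j : ℂ) * zIter Θ σ j z) ((q j : ℂ))

open Classical in
/-- The change index `k^{ch}`: `max {l ∈ {0,…,r} : σ l = -1} - 1` if such `l` exists,
and `-2` otherwise. -/
noncomputable def kch (σ : ℕ → ℝ) (r : ℕ) : ℤ :=
  if ∃ l, l ≤ r ∧ σ l = -1 then ((sSup {l : ℕ | l ≤ r ∧ σ l = -1} : ℕ) : ℤ) - 1 else -2

/-- The index `l_min(q) = min {j : κ < j ≤ r, q j ≠ 0}`. -/
noncomputable def lmin (q : ℕ → ℚ) (κ r : ℕ) : ℕ := sInf {j : ℕ | κ < j ∧ j ≤ r ∧ q j ≠ 0}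

/-- `q` is `κ`-positive: `q κ > 0`, or `q κ = 0` and `q (l_min) < 0`.  (Under the
hypothesis `(q κ, …, q r) ≠ 0` this agrees with the paper's definition both for
`κ = r` and for `κ = k^{ch} ≥ 0`.) -/
def kappaPos (q : ℕ → ℚ) (κ r : ℕ) : Prop :=
  0 < q κ ∨ (q κ = 0 ∧ q (lmin q κ r) < 0)

/-- `q` is `κ`-negative: `q κ < 0`, or `q κ = 0` and `q (l_min) > 0`. -/
def kappaNeg (q : ℕ → ℚ) (κ r : ℕ) : Prop :=
  q κ < 0 ∨ (q κ = 0 ∧ 0 < q (lmin q κ r))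

/-!
For `l ≤ κ` the maps `z_l` are continuous at `μ_κ`: by induction `σ_l z_l(μ_κ) = exp μ_{κ-l-1,κ}`
lies on the positive real axis when `l < κ`, where the principal logarithm is continuous, and
`z_κ(μ_κ) = 0`. Hence along `H` the numbers `log |z_l|` stay bounded for `l < κ` while
`log |z_κ| → -∞`. Since `|z_{j+1}|` differs from `|log |z_j||` by at most `π + |Θ_{j+1}|`, each
`log |z_j|` with `κ < j ≤ r` tends to `+∞` and is `o(log |z_{j-1}|)`. So
`log |(σ𝒵)^{⊗q}| = ∑ q_j log |z_j|` is asymptotic to `q_t log |z_t|` for the first `t ≥ κ` with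
`q_t ≠ 0`, and κ-positivity (κ-negativity) says exactly that this tends to `-∞` (`+∞`).
-/

open Filter Topology Asymptotics

section LogAsymptotics

variable {α : Type*} {l : Filter α} {f g : α → ℝ} {C : ℝ}

theorem tendsto_atTop_of_abs_sub_le (hg : Tendsto g l atTop) (hfg : ∀ᶠ x in l, |f x - g x| ≤ C) :
    Tendsto f l atTop :=
  tendsto_atTop_mono' l (hfg.mono fun _ hx => by linarith [(abs_le.1 hx).1])
    (tendsto_atTop_add_const_right l (-C) hg)

theorem isLittleO_log_of_abs_sub_le (hg : Tendsto g l atTop) (hfg : ∀ᶠ x in l, |f x - g x| ≤ C) :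
    (fun x => Real.log (f x)) =o[l] g := by
  have hf := tendsto_atTop_of_abs_sub_le hg hfg
  refine (Real.isLittleO_log_id_atTop.comp_tendsto hf).trans_isBigO (IsBigO.of_bound 2 ?_)
  filter_upwards [hfg, hg.eventually_ge_atTop C, hf.eventually_ge_atTop 0] with x hx hgx hfx
  have hC : 0 ≤ C := (abs_nonneg _).trans hx
  rw [Function.comp_apply, id, Real.norm_of_nonneg hfx, Real.norm_of_nonneg (by linarith)]
  linarith [(abs_le.1 hx).2]

end LogAsymptotics

theorem muAux_sub (Θ σ : ℕ → ℝ) {κ l : ℕ} (hl : l < κ) :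
    muAux Θ σ κ (κ - l) = Θ l + σ l * Real.exp (muAux Θ σ κ (κ - l - 1)) := by
  obtain ⟨d, hd⟩ : ∃ d, κ - l = d + 1 := ⟨κ - l - 1, by omega⟩
  rw [hd, muAux, show κ - (d + 1) = l by omega, Nat.add_sub_cancel]

theorem tendsto_zIter_mu {Θ σ : ℕ → ℝ} {κ : ℕ} (hσ : ∀ i < κ, |σ i| = 1) :
    ∀ l ≤ κ, Tendsto (zIter Θ σ l) (𝓝 (mu Θ σ κ : ℂ))
      (𝓝 ((muAux Θ σ κ (κ - l) - Θ l : ℝ) : ℂ))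
  | 0, _ => by
    simpa [zIter, mu] using (tendsto_id (x := 𝓝 (mu Θ σ κ : ℂ))).sub_const (Θ 0 : ℂ)
  | l + 1, hl => by
    have hlκ : l < κ := hl
    set m := muAux Θ σ κ (κ - l - 1)
    have hσl : (σ l : ℂ) * σ l = 1 := by
      exact_mod_cast (abs_mul_abs_self (σ l)).symm.trans (by rw [hσ l hlκ, one_mul])
    have hw : Tendsto (fun z => (σ l : ℂ) * zIter Θ σ l z) (𝓝 (mu Θ σ κ : ℂ))
        (𝓝 (Real.exp m : ℂ)) := by
      convert (tendsto_zIter_mu hσ l hlκ.le).const_mul (σ l : ℂ) using 2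
      rw [muAux_sub Θ σ hlκ]
      push_cast
      rw [add_sub_cancel_left, ← mul_assoc, hσl, one_mul]
    have hlog := (hw.clog (Complex.ofReal_mem_slitPlane.2 (Real.exp_pos m))).sub_const
      (Θ (l + 1) : ℂ)
    rw [← Complex.ofReal_log (Real.exp_pos m).le, Real.log_exp] at hlog
    have hval : ((muAux Θ σ κ (κ - (l + 1)) - Θ (l + 1) : ℝ) : ℂ) = m - Θ (l + 1) := by
      rw [show κ - (l + 1) = κ - l - 1 by omega, Complex.ofReal_sub]
    rw [hval]
    exact hlog

theorem tendsto_zIter_mu_of_lt {Θ σ : ℕ → ℝ} {κ l : ℕ} (hσ : ∀ i < κ, |σ i| = 1) (hl : l < κ) :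
    Tendsto (zIter Θ σ l) (𝓝 (mu Θ σ κ : ℂ))
      (𝓝 ((σ l : ℂ) * (Real.exp (muAux Θ σ κ (κ - l - 1)) : ℂ))) := by
  convert tendsto_zIter_mu hσ l hl.le using 2
  rw [muAux_sub Θ σ hl]
  push_cast
  ring

theorem tendsto_zIter_mu_self {Θ σ : ℕ → ℝ} {κ : ℕ} (hσ : ∀ i < κ, |σ i| = 1) :
    Tendsto (zIter Θ σ κ) (𝓝 (mu Θ σ κ : ℂ)) (𝓝 0) := by
  simpa [muAux] using tendsto_zIter_mu hσ κ le_rfl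

theorem mem_slitPlane_of_mem_HIter {Θ σ : ℕ → ℝ} {n : ℕ} {z : ℂ} (hz : z ∈ HIter Θ σ n) {j : ℕ}
    (hj : j < n) : (σ j : ℂ) * zIter Θ σ j z ∈ Complex.slitPlane := by
  induction n with
  | zero => omega
  | succ n ih =>
    rcases (Nat.lt_succ_iff_lt_or_eq.1 hj) with hj | rfl
    · exact ih hz.1 hj
    · exact hz.2

noncomputable def logNormZ (Θ σ : ℕ → ℝ) (j : ℕ) (z : ℂ) : ℝ := Real.log ‖zIter Θ σ j z‖

theorem abs_norm_zIter_succ_sub_le {Θ σ : ℕ → ℝ} {j : ℕ} (hσ : |σ j| = 1) (z : ℂ) :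
    |‖zIter Θ σ (j + 1) z‖ - abs (logNormZ Θ σ j z)| ≤ Real.pi + |Θ (j + 1)| := by
  set L := Complex.log (σ j * zIter Θ σ j z)
  have hre : |L.re| = |logNormZ Θ σ j z| := by
    simp [L, logNormZ, Complex.log_re, hσ]
  have him : |L.im| ≤ Real.pi := by
    simpa [L, Complex.log_im] using Complex.abs_arg_le_pi _
  have hΘ : ‖(Θ (j + 1) : ℂ)‖ = |Θ (j + 1)| := by simp
  have h1 := norm_sub_le L (Θ (j + 1))
  have h2 := norm_sub_norm_le L (Θ (j + 1))
  have h3 := Complex.norm_le_abs_re_add_abs_im L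
  have h4 := Complex.abs_re_le_norm L
  rw [show zIter Θ σ (j + 1) z = L - Θ (j + 1) from rfl, abs_sub_le_iff]
  constructor <;> linarith [abs_nonneg (Θ (j + 1))]

section Chain

variable {Θ σ : ℕ → ℝ} {F : Filter ℂ} {κ r : ℕ}

theorem tendsto_logNormZ_succ_atTop {j : ℕ} (hσ : |σ j| = 1)
    (hj : Tendsto (fun z => |logNormZ Θ σ j z|) F atTop) :
    Tendsto (logNormZ Θ σ (j + 1)) F atTop :=
  Real.tendsto_log_atTop.comp <|
    tendsto_atTop_of_abs_sub_le hj (.of_forall (abs_norm_zIter_succ_sub_le hσ))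

theorem isLittleO_logNormZ_succ {j : ℕ} (hσ : |σ j| = 1)
    (hj : Tendsto (fun z => |logNormZ Θ σ j z|) F atTop) :
    logNormZ Θ σ (j + 1) =o[F] logNormZ Θ σ j :=
  isLittleO_abs_right.1 <|
    isLittleO_log_of_abs_sub_le hj (.of_forall (abs_norm_zIter_succ_sub_le hσ))

theorem tendsto_abs_logNormZ_atTop (hσ : ∀ i < r, |σ i| = 1)
    (hκ : Tendsto (logNormZ Θ σ κ) F atBot) {j : ℕ} (hκj : κ ≤ j) (hjr : j ≤ r) :
    Tendsto (fun z => |logNormZ Θ σ j z|) F atTop := by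
  induction j, hκj using Nat.le_induction with
  | base => exact tendsto_abs_atBot_atTop.comp hκ
  | succ j hκj ih =>
    exact tendsto_abs_atTop_atTop.comp
      (tendsto_logNormZ_succ_atTop (hσ j (by omega)) (ih (by omega)))

theorem tendsto_logNormZ_atTop (hσ : ∀ i < r, |σ i| = 1)
    (hκ : Tendsto (logNormZ Θ σ κ) F atBot) {j : ℕ} (hκj : κ < j) (hjr : j ≤ r) :
    Tendsto (logNormZ Θ σ j) F atTop := by
  obtain ⟨i, rfl⟩ : ∃ i, j = i + 1 := ⟨j - 1, by omega⟩
  exact tendsto_logNormZ_succ_atTop (hσ i (by omega))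
    (tendsto_abs_logNormZ_atTop hσ hκ (by omega) (by omega))

theorem isLittleO_logNormZ (hσ : ∀ i < r, |σ i| = 1)
    (hκ : Tendsto (logNormZ Θ σ κ) F atBot) {i j : ℕ} (hκi : κ ≤ i) (hij : i < j) (hjr : j ≤ r) :
    logNormZ Θ σ j =o[F] logNormZ Θ σ i := by
  induction j, hij using Nat.le_induction with
  | base =>
    exact isLittleO_logNormZ_succ (hσ i (by omega))
      (tendsto_abs_logNormZ_atTop hσ hκ hκi (by omega))
  | succ j hij ih =>
    exact (isLittleO_logNormZ_succ (hσ j (by omega))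
      (tendsto_abs_logNormZ_atTop hσ hκ (by omega) (by omega))).trans (ih (by omega))

theorem isEquivalent_sum_logNormZ (hσ : ∀ i < r, |σ i| = 1)
    (hκ : Tendsto (logNormZ Θ σ κ) F atBot)
    (hbdd : ∀ j < κ, logNormZ Θ σ j =O[F] fun _ => (1 : ℝ))
    {q : ℕ → ℝ} {t : ℕ} (hκt : κ ≤ t) (htr : t ≤ r) (hqt : q t ≠ 0)
    (hq : ∀ j, κ ≤ j → j < t → q j = 0) :
    (fun z => ∑ j ∈ Finset.range (r + 1), q j * logNormZ Θ σ j z) ~[F]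
      fun z => q t * logNormZ Θ σ t z := by
  have ht : t ∈ Finset.range (r + 1) := Finset.mem_range.2 (by omega)
  have hsub : ((fun z => ∑ j ∈ Finset.range (r + 1), q j * logNormZ Θ σ j z) -
      fun z => q t * logNormZ Θ σ t z) =
      ∑ j ∈ (Finset.range (r + 1)).erase t, fun z => q j * logNormZ Θ σ j z := by
    ext z
    simp only [Pi.sub_apply, Finset.sum_apply, ← Finset.add_sum_erase _ _ ht, add_sub_cancel_left]
  rw [IsEquivalent, hsub, isLittleO_const_mul_right_iff hqt]
  refine IsLittleO.sum fun j hj => ?_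
  obtain ⟨hjt, hjr⟩ := Finset.mem_erase.1 hj
  rcases lt_or_ge j κ with hjκ | hκj
  · exact ((hbdd j hjκ).const_mul_left (q j)).trans_isLittleO <|
      (isLittleO_one_left_iff ℝ).2 (tendsto_abs_logNormZ_atTop hσ hκ hκt htr)
  rcases lt_or_gt_of_ne hjt with hjt | hjt
  · simp [hq j hκj hjt]
  · exact (isLittleO_logNormZ hσ hκ hκt hjt (by simpa using hjr)).const_mul_left (q j)

end Chain

theorem norm_pcpow_ofReal (w : ℂ) (a : ℝ) : ‖pcpow w a‖ = Real.exp (a * Real.log ‖w‖) := by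
  simp [pcpow, Complex.norm_exp, Complex.log_re]

theorem norm_sigmaZpow {Θ σ : ℕ → ℝ} {r : ℕ} (hσ : ∀ i ≤ r, |σ i| = 1) (q : ℕ → ℚ) (z : ℂ) :
    ‖sigmaZpow Θ σ r q z‖ =
      Real.exp (∑ j ∈ Finset.range (r + 1), (q j : ℝ) * logNormZ Θ σ j z) := by
  rw [sigmaZpow, norm_prod, Real.exp_sum]
  refine Finset.prod_congr rfl fun j hj => ?_
  have hj : |σ j| = 1 := hσ j (Nat.lt_succ_iff.1 (Finset.mem_range.1 hj))
  rw [← Complex.ofReal_ratCast, norm_pcpow_ofReal, norm_mul, Complex.norm_real, Real.norm_eq_abs,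
    hj, one_mul, logNormZ]

theorem lmin_spec {q : ℕ → ℚ} {κ r : ℕ} (hqκ : q κ = 0) (hq : ∃ j, κ ≤ j ∧ j ≤ r ∧ q j ≠ 0) :
    κ < lmin q κ r ∧ lmin q κ r ≤ r ∧ q (lmin q κ r) ≠ 0 ∧
      ∀ j, κ ≤ j → j < lmin q κ r → q j = 0 := by
  obtain ⟨j, hκj, hjr, hqj⟩ := hq
  have hκj : κ < j := lt_of_le_of_ne hκj (by rintro rfl; exact hqj hqκ)
  obtain ⟨hκt, htr, hqt⟩ := Nat.sInf_mem (s := {j | κ < j ∧ j ≤ r ∧ q j ≠ 0}) ⟨j, hκj, hjr, hqj⟩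
  refine ⟨hκt, htr, hqt, fun i hκi hit => ?_⟩
  rcases hκi.eq_or_lt with rfl | hκi
  · exact hqκ
  · by_contra hqi
    exact Nat.notMem_of_lt_sInf hit ⟨hκi, (hit.trans_le htr).le, hqi⟩

theorem tendsto_norm_sigmaZpow {Θ σ : ℕ → ℝ} {F : Filter ℂ} {κ r : ℕ}
    (hσ : ∀ i ≤ r, |σ i| = 1) (hκr : κ ≤ r) (hκ : Tendsto (logNormZ Θ σ κ) F atBot)
    (hbdd : ∀ j < κ, logNormZ Θ σ j =O[F] fun _ => (1 : ℝ))
    {q : ℕ → ℚ} (hq : ∃ j, κ ≤ j ∧ j ≤ r ∧ q j ≠ 0) :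
    (kappaPos q κ r → Tendsto (fun z => ‖sigmaZpow Θ σ r q z‖) F (𝓝 0)) ∧
      (kappaNeg q κ r → Tendsto (fun z => ‖sigmaZpow Θ σ r q z‖) F atTop) := by
  have hσ' : ∀ i < r, |σ i| = 1 := fun i hi => hσ i hi.le
  set S := fun z => ∑ j ∈ Finset.range (r + 1), (q j : ℝ) * logNormZ Θ σ j z
  suffices (kappaPos q κ r → Tendsto S F atBot) ∧ (kappaNeg q κ r → Tendsto S F atTop) by
    simp only [norm_sigmaZpow hσ]
    exact ⟨fun h => Real.tendsto_exp_atBot.comp (this.1 h),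
      fun h => Real.tendsto_exp_atTop.comp (this.2 h)⟩
  by_cases hqκ : q κ = 0
  · obtain ⟨hκt, htr, hqt, hzero⟩ := lmin_spec hqκ hq
    have hS := (isEquivalent_sum_logNormZ hσ' hκ hbdd hκt.le htr (q := fun j => (q j : ℝ))
      (by exact_mod_cast hqt) (fun j h₁ h₂ => by simp [hzero j h₁ h₂])).symm
    have hL := tendsto_logNormZ_atTop hσ' hκ hκt htr
    simp only [kappaPos, kappaNeg, hqκ, lt_irrefl, false_or, true_and]
    exact ⟨fun h => hS.tendsto_atBot (hL.const_mul_atTop_of_neg (by exact_mod_cast h)),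
      fun h => hS.tendsto_atTop (hL.const_mul_atTop (by exact_mod_cast h))⟩
  · have hS := (isEquivalent_sum_logNormZ hσ' hκ hbdd le_rfl hκr (q := fun j => (q j : ℝ))
      (by exact_mod_cast hqκ) (fun j h₁ h₂ => absurd h₂ h₁.not_gt)).symm
    simp only [kappaPos, kappaNeg, hqκ, false_and, or_false]
    exact ⟨fun h => hS.tendsto_atBot (hκ.const_mul_atBot (by exact_mod_cast h)),
      fun h => hS.tendsto_atTop (hκ.const_mul_atBot_of_neg (by exact_mod_cast h))⟩

theorem kch_lt (σ : ℕ → ℝ) (r : ℕ) : kch σ r < r := by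
  unfold kch
  split_ifs with h
  · obtain ⟨l, hl⟩ := h
    have : sSup {l : ℕ | l ≤ r ∧ σ l = -1} ≤ r :=
      (Nat.sSup_mem (s := {l : ℕ | l ≤ r ∧ σ l = -1}) ⟨l, hl⟩ ⟨r, fun _ h => h.1⟩).1
    omega
  · omega

/-- **Proposition 5.34** (for a fixed value of the parameter `t`, with the definable
curve replaced by the limit `z → μ_κ` within `H`): let `κ = r`, or assume `k^{ch} ≥ 0`
and let `κ ∈ {k^{ch}, r}`. Then:
(1) for every `l < κ`, `z_l z` tends to the nonzero value `σ l * exp (μ_{κ-l-1,κ})`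
as `z → μ_κ` within `H`;
(2) for every `q ∈ ℚ^{r+1}` with `(q κ, …, q r) ≠ 0`: if `q` is `κ`-positive then
`|(σ𝒵)^{⊗q} z| → 0`, and if `q` is `κ`-negative then `|(σ𝒵)^{⊗q} z| → +∞`,
as `z → μ_κ` within `H`. -/
theorem tendsto_zIter_and_sigmaZpow_at_mu (r : ℕ) (Θ σ : ℕ → ℝ)
    (hσ : ∀ i, i ≤ r → σ i = 1 ∨ σ i = -1)
    (κ : ℕ) (hκcase : κ = r ∨ (0 ≤ kch σ r ∧ (κ : ℤ) = kch σ r)) :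
    (∀ l < κ,
      (σ l : ℂ) * (Real.exp (muAux Θ σ κ (κ - l - 1)) : ℂ) ≠ 0 ∧
      Filter.Tendsto (zIter Θ σ l)
        (nhdsWithin ((mu Θ σ κ : ℝ) : ℂ) (HIter Θ σ (r + 1)))
        (nhds ((σ l : ℂ) * (Real.exp (muAux Θ σ κ (κ - l - 1)) : ℂ)))) ∧
    (∀ q : ℕ → ℚ, (∃ j, κ ≤ j ∧ j ≤ r ∧ q j ≠ 0) →
      (kappaPos q κ r →
        Filter.Tendsto (fun z => ‖sigmaZpow Θ σ r q z‖)
          (nhdsWithin ((mu Θ σ κ : ℝ) : ℂ) (HIter Θ σ (r + 1))) (nhds 0)) ∧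
      (kappaNeg q κ r →
        Filter.Tendsto (fun z => ‖sigmaZpow Θ σ r q z‖)
          (nhdsWithin ((mu Θ σ κ : ℝ) : ℂ) (HIter Θ σ (r + 1))) Filter.atTop)) := by
  have hκr : κ ≤ r := by
    rcases hκcase with rfl | ⟨-, hκ⟩
    · exact le_rfl
    · have := kch_lt σ r
      omega
  have hσr : ∀ i ≤ r, |σ i| = 1 := fun i hi => by
    rcases hσ i hi with h | h <;> simp [h]
  have hσκ : ∀ i < κ, |σ i| = 1 := fun i hi => hσr i (by omega)
  have hlt : ∀ l < κ, Tendsto (zIter Θ σ l) (𝓝[HIter Θ σ (r + 1)] (mu Θ σ κ : ℂ))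
      (𝓝 ((σ l : ℂ) * (Real.exp (muAux Θ σ κ (κ - l - 1)) : ℂ))) := fun l hl =>
    (tendsto_zIter_mu_of_lt hσκ hl).mono_left nhdsWithin_le_nhds
  have hne : ∀ l < κ, (σ l : ℂ) * (Real.exp (muAux Θ σ κ (κ - l - 1)) : ℂ) ≠ 0 := fun l hl =>
    mul_ne_zero (Complex.ofReal_ne_zero.2 (abs_ne_zero.1 (by simp [hσκ l hl])))
      (Complex.ofReal_ne_zero.2 (Real.exp_pos _).ne')
  refine ⟨fun l hl => ⟨hne l hl, hlt l hl⟩, fun q hq => tendsto_norm_sigmaZpow hσr hκr ?_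
    (fun j hj => ((hlt j hj).norm.log (norm_ne_zero_iff.2 (hne j hj))).isBigO_one ℝ) hq⟩
  have hzκ : Tendsto (zIter Θ σ κ) (𝓝[HIter Θ σ (r + 1)] (mu Θ σ κ : ℂ)) (𝓝[≠] 0) :=
    tendsto_nhdsWithin_iff.2 ⟨(tendsto_zIter_mu_self hσκ).mono_left nhdsWithin_le_nhds,
      eventually_mem_nhdsWithin.mono fun z hz =>
        right_ne_zero_of_mul (Complex.slitPlane_ne_zero
          (mem_slitPlane_of_mem_HIter hz (Nat.lt_succ_of_le hκr)))⟩
  exact Real.tendsto_log_nhdsGT_zero.comp (tendsto_norm_nhdsNE_zero.comp hzκ)
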